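/- arXiv:2512.25050 — 2 statements merged into one kernel-verified Lean document; each statement's English description precedes it below -/
import Mathlib

section
/- Let $f(\mathbf{x}) = \frac{1}{4}|\mathbf{x}|^2$ on $\mathbb{R}^n$. For every $C^1$ function $u$ on $\mathbb{R}^n$ with $\|u\|_{L^2_f} + \|\nabla u\|_{L^2_f} < \infty$, one has $\|(r+1)u\|_{L^2_f} \le C(\|u\|_{L^2_f} + \|\nabla u\|_{L^2_f})$ for a constant $C$ depending only on $n$, where $r(\mathbf{x}) = |\mathbf{x}|$. -/
/-!
On a line, `(v² t e^{-(K+t²)/4})' = (2 v v' t + v² - v² t² / 2) e^{-(K+t²)/4}`, and the boundary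
values of `v² t e^{-(K+t²)/4}` at `±R` have the sign of `±R`. Integrating over `[-R, R]` and
absorbing the cross term by `2 v v' t ≤ v² t² / 4 + 4 v'²` gives
`∫ v² t² e^{-(K+t²)/4} ≤ ∫ (4 v² + 16 v'²) e^{-(K+t²)/4}` on every line, with no integrability
assumption. Fubini along each coordinate direction and summation over the coordinates bound
`∫ |x|² u² e^{-|x|²/4}` by `n ∫ (4 u² + 16 |∇u|²) e^{-|x|²/4}`, and `(r + 1)² ≤ 2 r² + 2`
finishes the proof.
-/

open MeasureTheory Real Filter Set
open scoped RealInnerProductSpace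

theorem lintegral_ofReal_le_of_forall_intervalIntegral_le {P Q : ℝ → ℝ} (hP : Continuous P)
    (hQ : Continuous Q) (hP0 : 0 ≤ P) (hQ0 : 0 ≤ Q)
    (h : ∀ R, 0 ≤ R → ∫ t in -R..R, P t ≤ ∫ t in -R..R, Q t) :
    ∫⁻ t, ENNReal.ofReal (P t) ≤ ∫⁻ t, ENNReal.ofReal (Q t) := by
  have hcover := aecover_Ioc (μ := volume) (l := (atTop : Filter ℝ))
    tendsto_neg_atTop_atBot tendsto_id
  refine le_of_tendsto (hcover.lintegral_tendsto_of_countably_generated (by fun_prop)) ?_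
  filter_upwards [eventually_ge_atTop 0] with R hR
  have hRR : -R ≤ R := by linarith
  calc ∫⁻ t in Ioc (-R) (id R), ENNReal.ofReal (P t)
      = ENNReal.ofReal (∫ t in -R..R, P t) := by
        rw [intervalIntegral.integral_of_le hRR, ofReal_integral_eq_lintegral_ofReal
          hP.integrableOn_Ioc (ae_of_all _ hP0)]
        rfl
    _ ≤ ENNReal.ofReal (∫ t in -R..R, Q t) := ENNReal.ofReal_le_ofReal (h R hR)
    _ = ∫⁻ t in Ioc (-R) R, ENNReal.ofReal (Q t) := by
        rw [intervalIntegral.integral_of_le hRR, ofReal_integral_eq_lintegral_ofReal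
          hQ.integrableOn_Ioc (ae_of_all _ hQ0)]
    _ ≤ ∫⁻ t, ENNReal.ofReal (Q t) := setLIntegral_le_lintegral _ _

theorem hasDerivAt_exp_neg_add_sq_div_four (K t : ℝ) :
    HasDerivAt (fun t => exp (-(K + t ^ 2) / 4)) (-(t / 2) * exp (-(K + t ^ 2) / 4)) t := by
  have h : HasDerivAt (fun t : ℝ => -(K + t ^ 2) / 4) (-(t / 2)) t :=
    (((hasDerivAt_pow 2 t).const_add K).fun_neg.div_const 4).congr_deriv (by ring)
  simpa only [mul_comm] using h.exp

theorem intervalIntegral_sq_mul_sq_mul_exp_le {v v' : ℝ → ℝ} (hv : ∀ t, HasDerivAt v (v' t) t)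
    (hv' : Continuous v') (K : ℝ) {R : ℝ} (hR : 0 ≤ R) :
    ∫ t in -R..R, v t ^ 2 * t ^ 2 * exp (-(K + t ^ 2) / 4) ≤
      ∫ t in -R..R, (4 * v t ^ 2 + 16 * v' t ^ 2) * exp (-(K + t ^ 2) / 4) := by
  have hvc : Continuous v := continuous_iff_continuousAt.2 fun t => (hv t).continuousAt
  set g' : ℝ → ℝ := fun t => (2 * v t * v' t * t + v t ^ 2 - v t ^ 2 * t ^ 2 / 2) *
    exp (-(K + t ^ 2) / 4)
  have hg : ∀ t, HasDerivAt (fun t => v t ^ 2 * t * exp (-(K + t ^ 2) / 4)) (g' t) t := fun t =>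
    ((((hv t).fun_pow 2).fun_mul (hasDerivAt_id' t)).fun_mul
      (hasDerivAt_exp_neg_add_sq_div_four K t)).congr_deriv (by simp only [g']; ring)
  have hg'c : Continuous g' := by fun_prop
  have hQc : Continuous fun t => (4 * v t ^ 2 + 16 * v' t ^ 2) * exp (-(K + t ^ 2) / 4) := by
    fun_prop
  have h4g'c : Continuous fun t => 4 * g' t := by fun_prop
  have hg'_nonneg : 0 ≤ ∫ t in -R..R, g' t := by
    rw [intervalIntegral.integral_eq_sub_of_hasDerivAt (fun t _ => hg t)
      (hg'c.intervalIntegrable _ _)]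
    have hright : 0 ≤ v R ^ 2 * R * exp (-(K + R ^ 2) / 4) := by positivity
    have hleft : v (-R) ^ 2 * (-R) * exp (-(K + (-R) ^ 2) / 4) ≤ 0 :=
      mul_nonpos_of_nonpos_of_nonneg
        (mul_nonpos_of_nonneg_of_nonpos (sq_nonneg _) (by linarith)) (exp_pos _).le
    linarith
  calc ∫ t in -R..R, v t ^ 2 * t ^ 2 * exp (-(K + t ^ 2) / 4)
      ≤ ∫ t in -R..R, ((4 * v t ^ 2 + 16 * v' t ^ 2) * exp (-(K + t ^ 2) / 4) - 4 * g' t) := by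
        refine intervalIntegral.integral_mono_on (by linarith)
          (Continuous.intervalIntegrable (by fun_prop) _ _)
          ((hQc.sub h4g'c).intervalIntegrable _ _) fun t _ => ?_
        -- the slack is `(4 v' - v t)² e^{-(K+t²)/4}`
        have := mul_nonneg (sq_nonneg (4 * v' t - v t * t)) (exp_pos (-(K + t ^ 2) / 4)).le
        simp only [g']
        nlinarith
    _ ≤ ∫ t in -R..R, (4 * v t ^ 2 + 16 * v' t ^ 2) * exp (-(K + t ^ 2) / 4) := by
        rw [intervalIntegral.integral_sub (hQc.intervalIntegrable _ _)
          (h4g'c.intervalIntegrable _ _), intervalIntegral.integral_const_mul]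
        linarith

theorem lintegral_sq_mul_sq_mul_exp_le {v v' : ℝ → ℝ} (hv : ∀ t, HasDerivAt v (v' t) t)
    (hv' : Continuous v') (K : ℝ) :
    ∫⁻ t, ENNReal.ofReal (v t ^ 2 * t ^ 2 * exp (-(K + t ^ 2) / 4)) ≤
      ∫⁻ t, ENNReal.ofReal ((4 * v t ^ 2 + 16 * v' t ^ 2) * exp (-(K + t ^ 2) / 4)) := by
  have hvc : Continuous v := continuous_iff_continuousAt.2 fun t => (hv t).continuousAt
  exact lintegral_ofReal_le_of_forall_intervalIntegral_le (by fun_prop) (by fun_prop)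
    (fun t => by positivity) (fun t => by positivity)
    fun R hR => intervalIntegral_sq_mul_sq_mul_exp_le hv hv' K hR

theorem lintegral_sq_mul_sq_mul_exp_along_line_le {E : Type*} [NormedAddCommGroup E]
    [InnerProductSpace ℝ E] {u : E → ℝ} (hu : ContDiff ℝ 1 u) {b e : E} (hbe : ⟪b, e⟫ = 0)
    (he : ‖e‖ = 1) :
    ∫⁻ t : ℝ, ENNReal.ofReal (u (b + t • e) ^ 2 * t ^ 2 * exp (-‖b + t • e‖ ^ 2 / 4)) ≤
      ∫⁻ t : ℝ, ENNReal.ofReal ((4 * u (b + t • e) ^ 2 + 16 * ‖fderiv ℝ u (b + t • e)‖ ^ 2) *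
        exp (-‖b + t • e‖ ^ 2 / 4)) := by
  have hnorm : ∀ t : ℝ, ‖b + t • e‖ ^ 2 = ‖b‖ ^ 2 + t ^ 2 := fun t => by
    rw [norm_add_sq_real, inner_smul_right, hbe, norm_smul, he, Real.norm_eq_abs, mul_one,
      sq_abs]
    ring
  have hline : ∀ t : ℝ, HasDerivAt (fun s : ℝ => b + s • e) e t := fun t => by
    simpa using ((hasDerivAt_id t).smul_const e).const_add b
  have hv : ∀ t, HasDerivAt (fun s => u (b + s • e)) (fderiv ℝ u (b + t • e) e) t := fun t =>
    (hu.differentiable one_ne_zero _).hasFDerivAt.comp_hasDerivAt t (hline t)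
  have hv' : Continuous fun t : ℝ => fderiv ℝ u (b + t • e) e :=
    ((hu.continuous_fderiv one_ne_zero).comp (by fun_prop)).clm_apply continuous_const
  simp only [hnorm]
  refine (lintegral_sq_mul_sq_mul_exp_le hv hv' _).trans (lintegral_mono fun t => ?_)
  gcongr ENNReal.ofReal ((4 * _ + 16 * ?_) * _)
  calc fderiv ℝ u (b + t • e) e ^ 2 = |fderiv ℝ u (b + t • e) e| ^ 2 := (sq_abs _).symm
    _ ≤ ‖fderiv ℝ u (b + t • e)‖ ^ 2 := by
      gcongr
      simpa [he] using (fderiv ℝ u (b + t • e)).le_opNorm e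

namespace EuclideanSpace

variable {ι : Type*}

theorem toLp_update_eq_add_smul_single [DecidableEq ι] (x : ι → ℝ) (i : ι) (t : ℝ) :
    WithLp.toLp 2 (Function.update x i t) =
      WithLp.toLp 2 (Function.update x i 0) + t • EuclideanSpace.single i 1 := by
  ext j
  by_cases hj : j = i
  · subst hj; simp
  · simp [hj]

variable [Fintype ι]

theorem lintegral_le_of_forall_lintegral_update_le [DecidableEq ι] (i : ι)
    {F G : EuclideanSpace ℝ ι → ENNReal} (hF : Measurable F) (hG : Measurable G)
    (h : ∀ x : ι → ℝ, ∫⁻ t, F (WithLp.toLp 2 (Function.update x i t)) ≤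
      ∫⁻ t, G (WithLp.toLp 2 (Function.update x i t))) :
    ∫⁻ x, F x ≤ ∫⁻ x, G x := by
  rw [← (PiLp.volume_preserving_toLp ι).lintegral_comp hF,
    ← (PiLp.volume_preserving_toLp ι).lintegral_comp hG, volume_pi]
  refine lintegral_le_of_lmarginal_le {i} (hF.comp (by fun_prop)) (hG.comp (by fun_prop)) ?_
  simp only [lmarginal_singleton]
  exact h

theorem lintegral_sq_mul_coord_sq_mul_exp_le {u : EuclideanSpace ℝ ι → ℝ} (hu : ContDiff ℝ 1 u)
    (i : ι) :
    ∫⁻ x, ENNReal.ofReal (u x ^ 2 * x i ^ 2 * exp (-‖x‖ ^ 2 / 4)) ≤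
      ∫⁻ x, ENNReal.ofReal ((4 * u x ^ 2 + 16 * ‖fderiv ℝ u x‖ ^ 2) * exp (-‖x‖ ^ 2 / 4)) := by
  classical
  have hDu := hu.continuous_fderiv one_ne_zero
  have huc := hu.continuous
  refine lintegral_le_of_forall_lintegral_update_le i (by fun_prop) (by fun_prop) fun x => ?_
  have hline := toLp_update_eq_add_smul_single x i
  set b : EuclideanSpace ℝ ι := WithLp.toLp 2 (Function.update x i 0)
  simp only [Function.update_self, hline]
  have hbe : ⟪b, EuclideanSpace.single i 1⟫ = 0 := by simp [b, inner_single_right]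
  exact lintegral_sq_mul_sq_mul_exp_along_line_le hu hbe (by simp)

theorem lintegral_norm_sq_mul_sq_mul_exp_le {u : EuclideanSpace ℝ ι → ℝ} (hu : ContDiff ℝ 1 u) :
    ∫⁻ x, ENNReal.ofReal (‖x‖ ^ 2 * u x ^ 2 * exp (-‖x‖ ^ 2 / 4)) ≤
      Fintype.card ι *
        ∫⁻ x, ENNReal.ofReal ((4 * u x ^ 2 + 16 * ‖fderiv ℝ u x‖ ^ 2) * exp (-‖x‖ ^ 2 / 4)) := by
  have := hu.continuous
  calc ∫⁻ x, ENNReal.ofReal (‖x‖ ^ 2 * u x ^ 2 * exp (-‖x‖ ^ 2 / 4))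
      = ∫⁻ x, ∑ i, ENNReal.ofReal (u x ^ 2 * x i ^ 2 * exp (-‖x‖ ^ 2 / 4)) := by
        refine lintegral_congr fun x => ?_
        rw [← ENNReal.ofReal_sum_of_nonneg fun i _ => by positivity, ← Finset.sum_mul,
          ← Finset.mul_sum, ← real_norm_sq_eq]
        ring_nf
    _ = ∑ i, ∫⁻ x, ENNReal.ofReal (u x ^ 2 * x i ^ 2 * exp (-‖x‖ ^ 2 / 4)) :=
        lintegral_finsetSum _ fun i _ => by fun_prop
    _ ≤ ∑ _i : ι,
          ∫⁻ x, ENNReal.ofReal ((4 * u x ^ 2 + 16 * ‖fderiv ℝ u x‖ ^ 2) * exp (-‖x‖ ^ 2 / 4)) :=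
        Finset.sum_le_sum fun i _ => lintegral_sq_mul_coord_sq_mul_exp_le hu i
    _ = _ := by simp

theorem lintegral_norm_add_one_sq_mul_sq_mul_exp_le {u : EuclideanSpace ℝ ι → ℝ}
    (hu : ContDiff ℝ 1 u) :
    ∫⁻ x, ENNReal.ofReal ((‖x‖ + 1) ^ 2 * u x ^ 2 * exp (-‖x‖ ^ 2 / 4)) ≤
      2 * (Fintype.card ι *
        ∫⁻ x, ENNReal.ofReal ((4 * u x ^ 2 + 16 * ‖fderiv ℝ u x‖ ^ 2) * exp (-‖x‖ ^ 2 / 4))) +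
      2 * ∫⁻ x, ENNReal.ofReal (u x ^ 2 * exp (-‖x‖ ^ 2 / 4)) := by
  have := hu.continuous
  calc ∫⁻ x, ENNReal.ofReal ((‖x‖ + 1) ^ 2 * u x ^ 2 * exp (-‖x‖ ^ 2 / 4))
      ≤ ∫⁻ x, (ENNReal.ofReal (2 * (‖x‖ ^ 2 * u x ^ 2 * exp (-‖x‖ ^ 2 / 4)))
          + ENNReal.ofReal (2 * (u x ^ 2 * exp (-‖x‖ ^ 2 / 4)))) := by
        refine lintegral_mono fun x => ?_
        rw [← ENNReal.ofReal_add (by positivity) (by positivity)]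
        refine ENNReal.ofReal_le_ofReal ?_
        have : 0 ≤ u x ^ 2 * exp (-‖x‖ ^ 2 / 4) := by positivity
        nlinarith [sq_nonneg (‖x‖ - 1)]
    _ = 2 * (∫⁻ x, ENNReal.ofReal (‖x‖ ^ 2 * u x ^ 2 * exp (-‖x‖ ^ 2 / 4))) +
          2 * ∫⁻ x, ENNReal.ofReal (u x ^ 2 * exp (-‖x‖ ^ 2 / 4)) := by
        simp only [ENNReal.ofReal_mul zero_le_two, ENNReal.ofReal_ofNat]
        rw [lintegral_add_left (by fun_prop), lintegral_const_mul _ (by fun_prop),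
          lintegral_const_mul _ (by fun_prop)]
    _ ≤ _ := by grw [lintegral_norm_sq_mul_sq_mul_exp_le hu]

end EuclideanSpace

theorem mul_add_mul_le_sq_mul_sqrt_add_sqrt {a b c A B : ℝ} (ha : a ≤ c ^ 2) (hb : b ≤ c ^ 2)
    (hA : 0 ≤ A) (hB : 0 ≤ B) : a * A + b * B ≤ (c * (√A + √B)) ^ 2 := by
  have hAB : A + B ≤ (√A + √B) ^ 2 := by
    nlinarith [sq_sqrt hA, sq_sqrt hB, mul_nonneg (sqrt_nonneg A) (sqrt_nonneg B)]
  calc a * A + b * B ≤ c ^ 2 * A + c ^ 2 * B := by gcongr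
    _ = c ^ 2 * (A + B) := by ring
    _ ≤ (c * (√A + √B)) ^ 2 := by rw [mul_pow]; gcongr

/-- Gaussian-weighted Poincaré inequality: with `f(x) = |x|²/4`,
`‖(r+1)u‖_{L²_f} ≤ C(n) (‖u‖_{L²_f} + ‖∇u‖_{L²_f})` for every `C¹` function `u` with
finite weighted norms. -/
theorem stmt_0 (n : ℕ) :
    ∃ C : ℝ, 0 < C ∧
      ∀ u : EuclideanSpace ℝ (Fin n) → ℝ, ContDiff ℝ 1 u →
        Integrable (fun x : EuclideanSpace ℝ (Fin n) =>
          (u x) ^ 2 * Real.exp (-(‖x‖ ^ 2) / 4)) →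
        Integrable (fun x : EuclideanSpace ℝ (Fin n) =>
          ‖fderiv ℝ u x‖ ^ 2 * Real.exp (-(‖x‖ ^ 2) / 4)) →
        (∫⁻ x : EuclideanSpace ℝ (Fin n),
            ENNReal.ofReal ((‖x‖ + 1) ^ 2 * (u x) ^ 2 * Real.exp (-(‖x‖ ^ 2) / 4))) ≤
          ENNReal.ofReal ((C *
            (Real.sqrt (∫ x : EuclideanSpace ℝ (Fin n),
                (u x) ^ 2 * Real.exp (-(‖x‖ ^ 2) / 4)) +
             Real.sqrt (∫ x : EuclideanSpace ℝ (Fin n),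
                ‖fderiv ℝ u x‖ ^ 2 * Real.exp (-(‖x‖ ^ 2) / 4)))) ^ 2) := by
  refine ⟨32 * n + 2, by positivity, fun u hu hA hB => ?_⟩
  set A := ∫ x, u x ^ 2 * exp (-‖x‖ ^ 2 / 4)
  set B := ∫ x, ‖fderiv ℝ u x‖ ^ 2 * exp (-‖x‖ ^ 2 / 4)
  have hA0 : 0 ≤ A := integral_nonneg fun x => by positivity
  have hB0 : 0 ≤ B := integral_nonneg fun x => by positivity
  have hAl : ∫⁻ x, ENNReal.ofReal (u x ^ 2 * exp (-‖x‖ ^ 2 / 4)) = ENNReal.ofReal A :=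
    (ofReal_integral_eq_lintegral_ofReal hA (ae_of_all _ fun x => by positivity)).symm
  have hQ : Integrable fun x => (4 * u x ^ 2 + 16 * ‖fderiv ℝ u x‖ ^ 2) * exp (-‖x‖ ^ 2 / 4) :=
    ((hA.const_mul 4).add (hB.const_mul 16)).congr
      (ae_of_all _ fun x => by simp only [Pi.add_apply]; ring)
  have hQl : ∫⁻ x, ENNReal.ofReal ((4 * u x ^ 2 + 16 * ‖fderiv ℝ u x‖ ^ 2) * exp (-‖x‖ ^ 2 / 4))
      = ENNReal.ofReal (4 * A + 16 * B) := by
    rw [← ofReal_integral_eq_lintegral_ofReal hQ (ae_of_all _ fun x => by positivity),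
      ← integral_const_mul, ← integral_const_mul, ← integral_add (hA.const_mul 4)
      (hB.const_mul 16)]
    congr with x
    ring
  have hn : (0 : ℝ) ≤ n := n.cast_nonneg
  calc _ ≤ 2 * (n * ENNReal.ofReal (4 * A + 16 * B)) + 2 * ENNReal.ofReal A := by
        simpa only [hQl, hAl, Fintype.card_fin] using
          EuclideanSpace.lintegral_norm_add_one_sq_mul_sq_mul_exp_le hu
    _ = ENNReal.ofReal ((8 * n + 2) * A + 32 * n * B) := by
        rw [← ENNReal.ofReal_natCast, ← ENNReal.ofReal_ofNat 2, ← ENNReal.ofReal_mul hn,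
          ← ENNReal.ofReal_mul zero_le_two, ← ENNReal.ofReal_mul zero_le_two,
          ← ENNReal.ofReal_add (by positivity) (by positivity)]
        ring_nf
    _ ≤ _ := ENNReal.ofReal_le_ofReal <|
        mul_add_mul_le_sq_mul_sqrt_add_sqrt (by nlinarith) (by nlinarith) hA0 hB0
end

section
/- Let $\lambda : (-\infty, T) \to \mathbb{R}$ be continuously differentiable with $\lambda(\tau) \to 0$ as $\tau \to -\infty$, and suppose $\lambda$ satisfies $\partial_\tau \lambda \le -(\sqrt{2} - 0.1)\lambda^2$ whenever $\lambda(\tau) \ge -c$ for some fixed $c > 0$. Then it is impossible that $\lambda(\tau) \in [-c, 0)$ for all $\tau \in (-\infty, T)$ with $T = \infty$; and if $\lambda$ is not identically $\ge -c$, there is a unique $\tau_0$ with $\lambda(\tau_0) = -c$, $\lambda > -c$ on $(-\infty, \tau_0)$ and $\lambda < -c$ on $(\tau_0, T)$. -/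
open Set Filter Topology

lemma sqrtK_pos : (0:ℝ) < Real.sqrt 2 - 0.1 := by
  have h1 : (1:ℝ) < Real.sqrt 2 := by
    rw [show (1:ℝ) = Real.sqrt 1 by simp]
    exact Real.sqrt_lt_sqrt (by norm_num) (by norm_num)
  linarith

lemma barrier {c T : ℝ} (hc : 0 < c) (f f' : ℝ → ℝ)
    (hd : ∀ τ ∈ Set.Iio T, HasDerivAt f (f' τ) τ)
    (hineq : ∀ τ ∈ Set.Iio T, -c ≤ f τ → f' τ ≤ -(Real.sqrt 2 - 0.1) * (f τ) ^ 2)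
    {s t : ℝ} (hfs : f s = -c) (hst : s < t) (htT : t < T) :
    f t < -c := by
  by_contra h
  push_neg at h
  have hK := sqrtK_pos
  have hsT : s < T := hst.trans htT
  have hderneg : ∀ u ∈ Set.Iio T, f u = -c → f' u < 0 := by
    intro u huT hu
    have := hineq u huT (by rw [hu])
    have : f' u ≤ -(Real.sqrt 2 - 0.1) * c ^ 2 := by rw [hu] at this; simpa using this
    have hp : 0 < (Real.sqrt 2 - 0.1) * c ^ 2 := by positivity
    linarith
  have hf's : f' s < 0 := hderneg s hsT hfs
  -- slope near s from the right is negative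
  have hslope : Tendsto (slope f s) (𝓝[≠] s) (𝓝 (f' s)) :=
    hasDerivAt_iff_tendsto_slope.mp (hd s hsT)
  have hmono : (𝓝[>] s) ≤ (𝓝[≠] s) :=
    nhdsWithin_mono s (fun x hx => ne_of_gt hx)
  have h1 : ∀ᶠ x in 𝓝[>] s, slope f s x < 0 :=
    (hslope.mono_left hmono).eventually_lt_const hf's
  have h2 : Ioo s t ∈ 𝓝[>] s := Ioo_mem_nhdsGT hst
  obtain ⟨s', hs'slope, hs'mem⟩ := (h1.and (eventually_of_mem h2 (fun x hx => hx))).exists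
  have hfs' : f s' < -c := by
    have hpos : 0 < s' - s := sub_pos.mpr hs'mem.1
    rw [slope_def_field] at hs'slope
    have := (div_neg_iff.mp hs'slope)
    rcases this with ⟨_, h'⟩ | ⟨h', _⟩
    · linarith
    · rw [← hfs]; linarith
  -- the set where f ≥ -c in [s', t]
  set S : Set ℝ := Icc s' t ∩ f ⁻¹' Ici (-c) with hS
  have hsubT : Icc s' t ⊆ Iio T := fun x hx => lt_of_le_of_lt hx.2 htT
  have hcont : ContinuousOn f (Icc s' t) :=
    fun x hx => ((hd x (hsubT hx)).continuousAt).continuousWithinAt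
  have hclosed : IsClosed S :=
    hcont.preimage_isClosed_of_isClosed isClosed_Icc isClosed_Ici
  have hs't : s' < t := hs'mem.2
  have htS : t ∈ S := ⟨⟨hs't.le, le_refl t⟩, h⟩
  have hbdd : BddBelow S := ⟨s', fun r hr => hr.1.1⟩
  set u := sInf S with hu
  have huS : u ∈ S := hclosed.csInf_mem ⟨t, htS⟩ hbdd
  have hs'u : s' < u := by
    rcases lt_or_eq_of_le huS.1.1 with h' | h'
    · exact h'
    · exact absurd (h' ▸ huS.2) (not_le.mpr hfs')
  have hut : u ≤ t := huS.1.2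
  have huT : u < T := lt_of_le_of_lt hut htT
  have hlt : ∀ r ∈ Ioo s' u, f r < -c := by
    intro r hr
    by_contra hge
    push_neg at hge
    have : r ∈ S := ⟨⟨hr.1.le, hr.2.le.trans hut⟩, hge⟩
    exact absurd (csInf_le hbdd this) (not_le.mpr hr.2)
  -- f u = -c
  have htendu : Tendsto f (𝓝[<] u) (𝓝 (f u)) :=
    ((hd u huT).continuousAt.tendsto).mono_left nhdsWithin_le_nhds
  have hIoo : Ioo s' u ∈ 𝓝[<] u := Ioo_mem_nhdsLT hs'u
  have hfu_le : f u ≤ -c :=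
    le_of_tendsto htendu (eventually_of_mem hIoo (fun r hr => (hlt r hr).le))
  have hfu : f u = -c := le_antisymm hfu_le huS.2
  -- slope from the left at u is positive, so f' u ≥ 0
  have hslopeu : Tendsto (slope f u) (𝓝[<] u) (𝓝 (f' u)) :=
    (hasDerivAt_iff_tendsto_slope.mp (hd u huT)).mono_left
      (nhdsWithin_mono u (fun x hx => ne_of_lt hx))
  have hge0 : (0:ℝ) ≤ f' u := by
    refine ge_of_tendsto hslopeu (eventually_of_mem hIoo (fun r hr => ?_))
    rw [slope_def_field]
    have h1 : f r - f u < 0 := by rw [hfu]; linarith [hlt r hr]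
    have h2 : r - u < 0 := sub_neg.mpr hr.2
    exact le_of_lt (div_pos_of_neg_of_neg h1 h2)
  exact absurd (hderneg u huT hfu) (not_lt.mpr hge0)

/-- a continuously differentiable `λ : (-∞,T) → ℝ` with `λ(τ) → 0` as
`τ → -∞` satisfying the Riccati inequality `∂_τ λ ≤ -(√2 - 0.1)λ²` whenever `λ ≥ -c`
(for a fixed `c > 0`) cannot stay in `[-c, 0)` for all times if `T = ∞`; and if `λ` drops
below `-c` somewhere, then there is a unique time `τ₀` with `λ(τ₀) = -c`, `λ > -c` before
`τ₀` and `λ < -c` after `τ₀`. -/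
theorem stmt_11 (c : ℝ) (hc : 0 < c) :
    ((∀ f f' : ℝ → ℝ,
        (∀ τ, HasDerivAt f (f' τ) τ) → Continuous f' →
        Filter.Tendsto f Filter.atBot (nhds 0) →
        (∀ τ, -c ≤ f τ → f' τ ≤ -(Real.sqrt 2 - 0.1) * (f τ) ^ 2) →
        ¬ ∀ τ, f τ ∈ Set.Ico (-c) 0) ∧
     ∀ (T : ℝ) (f f' : ℝ → ℝ),
        (∀ τ ∈ Set.Iio T, HasDerivAt f (f' τ) τ) → ContinuousOn f' (Set.Iio T) →
        Filter.Tendsto f Filter.atBot (nhds 0) →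
        (∀ τ ∈ Set.Iio T, -c ≤ f τ → f' τ ≤ -(Real.sqrt 2 - 0.1) * (f τ) ^ 2) →
        (∃ τ ∈ Set.Iio T, f τ < -c) →
        ∃! τ₁ : ℝ, τ₁ ∈ Set.Iio T ∧ f τ₁ = -c ∧
          (∀ τ < τ₁, -c < f τ) ∧ (∀ τ ∈ Set.Ioo τ₁ T, f τ < -c)) := by
  have hK := sqrtK_pos
  constructor
  · -- Part 1
    intro f f' hd hc' htend hineq hall
    set K := Real.sqrt 2 - 0.1 with hKdef
    have hge : ∀ τ, -c ≤ f τ := fun τ => (hall τ).1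
    have hneg : ∀ τ, f τ < 0 := fun τ => (hall τ).2
    have hdiff : Differentiable ℝ f := fun x => (hd x).differentiableAt
    have hanti : Antitone f := by
      refine antitone_of_deriv_nonpos hdiff (fun x => ?_)
      rw [(hd x).deriv]
      have := hineq x (hge x)
      nlinarith [sq_nonneg (f x)]
    set a := f 0 with ha
    have haneg : a < 0 := hneg 0
    have hage : -c ≤ a := hge 0
    have ha2 : 0 < a ^ 2 := by nlinarith
    have hKa : 0 < K * a ^ 2 := mul_pos hK ha2
    -- h τ = f τ + K a² τ is antitone on [0, ∞)
    have hderh : ∀ x, HasDerivAt (fun τ => f τ + K * a ^ 2 * τ) (f' x + K * a ^ 2) x := by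
      intro x
      exact (hd x).add (by simpa using (hasDerivAt_id x).const_mul (K * a ^ 2))
    have hch : Continuous fun τ : ℝ => f τ + K * a ^ 2 * τ :=
      hdiff.continuous.add (continuous_const.mul continuous_id)
    have hantih : AntitoneOn (fun τ => f τ + K * a ^ 2 * τ) (Set.Ici 0) := by
      refine antitoneOn_of_deriv_nonpos (convex_Ici 0) hch.continuousOn
        (fun x _ => (hderh x).differentiableAt.differentiableWithinAt) (fun x hx => ?_)
      rw [(hderh x).deriv]
      rw [interior_Ici] at hx
      have hfx : f x ≤ a := hanti (le_of_lt hx)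
      have hsq : a ^ 2 ≤ f x ^ 2 := by nlinarith [hneg x]
      have h1 := hineq x (hge x)
      nlinarith
    set τ₃ : ℝ := (a + c) / (K * a ^ 2) + 1 with hτ₃
    have hτ₃pos : 0 ≤ τ₃ := by
      have h0 : 0 ≤ (a + c) / (K * a ^ 2) := div_nonneg (by linarith) hKa.le
      rw [hτ₃]; linarith
    have hmul : K * a ^ 2 * τ₃ = (a + c) + K * a ^ 2 := by
      rw [hτ₃, mul_add, mul_div_cancel₀ _ hKa.ne', mul_one]
    have := hantih (Set.self_mem_Ici) hτ₃pos hτ₃pos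
    simp only [mul_zero, add_zero] at this
    have hgeτ₃ := hge τ₃
    nlinarith
  · -- Part 2
    intro T f f' hd hc' htend hineq hdrop
    obtain ⟨τ₂, hτ₂T, hτ₂⟩ := hdrop
    have hcontf : ContinuousOn f (Set.Iio T) :=
      fun x hx => ((hd x hx).continuousAt).continuousWithinAt
    have hev : ∀ x : ℝ, ∃ b < x, -c < f b := by
      intro x
      have h1 : ∀ᶠ r in Filter.atBot, -c < f r :=
        htend.eventually_const_lt (by linarith)
      obtain ⟨b, hb1, hb2⟩ := (h1.and (Filter.eventually_lt_atBot x)).exists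
      exact ⟨b, hb2, hb1⟩
    have hlevel : ∀ b x, b < x → x < T → -c < f b → f x ≤ -c →
        ∃ τ', τ' ≤ x ∧ f τ' = -c := by
      intro b x hbx hxT hfb hfx
      have hsub : Set.Icc b x ⊆ Set.Iio T := fun r hr => lt_of_le_of_lt hr.2 hxT
      obtain ⟨τ', hmem, heq⟩ :=
        intermediate_value_Icc' hbx.le (hcontf.mono hsub) ⟨hfx, hfb.le⟩
      exact ⟨τ', hmem.2, heq⟩
    obtain ⟨b, hbτ₂, hfb⟩ := hev τ₂
    obtain ⟨τ₁, hτ₁le, hfτ₁⟩ := hlevel b τ₂ hbτ₂ hτ₂T hfb hτ₂.le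
    have hτ₁T : τ₁ < T := lt_of_le_of_lt hτ₁le hτ₂T
    have hafter : ∀ τ ∈ Set.Ioo τ₁ T, f τ < -c :=
      fun τ hτ => barrier hc f f' hd hineq hfτ₁ hτ.1 hτ.2
    have hbefore : ∀ τ < τ₁, -c < f τ := by
      intro τ hττ₁
      by_contra hle
      push_neg at hle
      obtain ⟨b', hb'τ, hfb'⟩ := hev τ
      obtain ⟨τ', hτ'le, hfτ'⟩ := hlevel b' τ hb'τ (hττ₁.trans hτ₁T) hfb' hle
      have := barrier hc f f' hd hineq hfτ' (lt_of_le_of_lt hτ'le hττ₁) hτ₁T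
      rw [hfτ₁] at this
      exact lt_irrefl _ this
    refine ⟨τ₁, ⟨hτ₁T, hfτ₁, hbefore, hafter⟩, ?_⟩
    rintro y ⟨hyT, hfy, -, -⟩
    rcases lt_trichotomy y τ₁ with h | h | h
    · exact absurd hfy (ne_of_gt (hbefore y h))
    · exact h
    · exact absurd hfy (ne_of_lt (hafter y ⟨h, hyT⟩))
end
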